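/- Let k and l be positive integers with k ≡ l (mod 3). Then: (a) the functions φ and φ̃ are linearly independent, i.e. if c₁·φ(x) + c₂·φ̃(x) = 0 for all x ∈ [0,L] then c₁ = c₂ = 0; and (b) if ψ : ℝ → ℂ is three times continuously differentiable and satisfies ψ'''(x) + ψ'(x) + i·λ·ψ(x) = 0 for every x ∈ [0,L], together with ψ(0) = ψ(L) = 0 and ψ'(0) = ψ'(L), then there exist c₁, c₂ ∈ ℂ such that ψ(x) = c₁·φ(x) + c₂·φ̃(x) for all x ∈ [0,L]. -/

import Mathlib

noncomputable section

/-- `n = k² + k·l + l²` as a real number. -/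
def nR (k l : ℕ) : ℝ := ((k ^ 2 + k * l + l ^ 2 : ℕ) : ℝ)

/-- The critical length `L = 2π√(n/3)`. -/
def LL (k l : ℕ) : ℝ := 2 * Real.pi * Real.sqrt (nR k l / 3)

/-- `λ = (2k+l)(k−l)(2l+k)/(3√3 n^{3/2})`. -/
def lam (k l : ℕ) : ℝ :=
  ((2 * k + l : ℕ) : ℝ) * ((k : ℝ) - (l : ℝ)) * ((2 * l + k : ℕ) : ℝ) /
    (3 * Real.sqrt 3 * nR k l ^ ((3 : ℝ) / 2))

/-- The Type 1 eigenfunction `φ`. -/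
def phi (k l : ℕ) : ℝ → ℂ := fun x =>
  -Complex.exp (Complex.I *
      ((x * (Real.sqrt 3 * ((2 * k + l : ℕ) : ℝ)) / (3 * Real.sqrt (nR k l)) : ℝ) : ℂ))
  - ((k : ℂ) / (l : ℂ)) * Complex.exp (-(Complex.I *
      ((x * (Real.sqrt 3 * ((k + 2 * l : ℕ) : ℝ)) / (3 * Real.sqrt (nR k l)) : ℝ) : ℂ)))
  + (((k : ℂ) + (l : ℂ)) / (l : ℂ)) * Complex.exp (Complex.I *
      ((x * (Real.sqrt 3 * ((l : ℝ) - (k : ℝ))) / (3 * Real.sqrt (nR k l)) : ℝ) : ℂ))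

/-- The Type 2 eigenfunction `φ̃`. -/
def phiT (k l : ℕ) : ℝ → ℂ := fun x =>
  Complex.exp (Complex.I *
      ((x * (Real.sqrt 3 * ((2 * k + l : ℕ) : ℝ)) / (3 * Real.sqrt (nR k l)) : ℝ) : ℂ))
  - Complex.exp (-(Complex.I *
      ((x * (Real.sqrt 3 * ((k + 2 * l : ℕ) : ℝ)) / (3 * Real.sqrt (nR k l)) : ℝ) : ℂ)))

end

/-!
The exponents of `φ` and `φ̃` are `μ x` for the three roots `μ = i s m` (`s = √3 / (3√n)`,
`m ∈ {2k+l, -(k+2l), l-k}`) of `z³ + z + iλ`, so every `c₁ φ + c₂ φ̃` solves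
`ψ''' + ψ' + iλψ = 0` and vanishes at `0`. Its first two derivatives at `0` are
`3is(k+l) c₂` and `3s²(k+l)(3k c₁ + (l-k) c₂)`, a triangular system in `(c₁, c₂)` with nonzero
diagonal. For (a), a combination vanishing on `[0, L]` has vanishing derivatives there, so
`c₁ = c₂ = 0`. For (b), choose `c₁, c₂` matching `ψ'(0), ψ''(0)`; then `ψ - c₁ φ - c₂ φ̃` has zero
initial data and vanishes by uniqueness for the first-order system `(g, g', g'')' = A (g, g', g'')`.
-/

open Complex Set

section ExpSum

variable {ι : Type*} [Fintype ι] (c μ : ι → ℂ)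

noncomputable def expSum (x : ℝ) : ℂ := ∑ i, c i * cexp (μ i * x)

theorem hasDerivAt_expSum (x : ℝ) : HasDerivAt (expSum c μ) (expSum (c * μ) μ x) x := by
  have h (i : ι) :
      HasDerivAt (fun y : ℝ => c i * cexp (μ i * y)) (c i * μ i * cexp (μ i * x)) x := by
    simpa [mul_assoc, mul_comm] using
      (((hasDerivAt_id x).ofReal_comp.const_mul (μ i)).cexp).const_mul (c i)
  unfold expSum
  simpa using HasDerivAt.fun_sum (u := Finset.univ) fun i _ => h i

theorem deriv_expSum : deriv (expSum c μ) = expSum (c * μ) μ :=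
  funext fun x => (hasDerivAt_expSum c μ x).deriv

theorem iteratedDeriv_expSum (n : ℕ) : iteratedDeriv n (expSum c μ) = expSum (c * μ ^ n) μ := by
  induction n with
  | zero => simp
  | succ n ih => rw [iteratedDeriv_succ, ih, deriv_expSum, pow_succ, mul_assoc]

theorem contDiff_expSum {n : WithTop ℕ∞} : ContDiff ℝ n (expSum c μ) :=
  ContDiff.sum fun _ _ => contDiff_const.mul (contDiff_const.mul ofRealCLM.contDiff).cexp

theorem expSum_zero : expSum c μ 0 = ∑ i, c i := by simp [expSum]

end ExpSum

section IteratedDeriv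

variable {F : Type*} [NormedAddCommGroup F] [NormedSpace ℝ F] {f : ℝ → F}

theorem hasDerivAt_iteratedDeriv {n m : ℕ} (hf : ContDiff ℝ n f) (hm : m < n) (x : ℝ) :
    HasDerivAt (iteratedDeriv m f) (iteratedDeriv (m + 1) f x) x := by
  rw [iteratedDeriv_succ]
  exact (hf.differentiable_iteratedDeriv m (by exact_mod_cast hm) x).hasDerivAt

theorem iteratedDeriv_eqOn_zero {a b : ℝ} {n : ℕ} (hab : a < b) (hf : ContDiff ℝ n f)
    (h : EqOn f 0 (Icc a b)) {m : ℕ} (hm : m ≤ n) : EqOn (iteratedDeriv m f) 0 (Icc a b) := by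
  induction m with
  | zero => simpa using h
  | succ m ih =>
    intro x hx
    have h0 : HasDerivWithinAt (iteratedDeriv m f) 0 (Icc a b) x :=
      (hasDerivWithinAt_const x _ (0 : F)).congr (ih (by omega)) (ih (by omega) hx)
    exact (uniqueDiffOn_Icc hab x hx).eq_deriv _
      (hasDerivAt_iteratedDeriv (m := m) hf (by omega) x).hasDerivWithinAt h0

end IteratedDeriv

section ThirdOrderODE

noncomputable def thirdOrderOp (p q r : ℂ) (f : ℝ → ℂ) (x : ℝ) : ℂ :=
  iteratedDeriv 3 f x + p * iteratedDeriv 2 f x + q * deriv f x + r * f x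

variable {p q r : ℂ}

theorem thirdOrderOp_sub {f g : ℝ → ℂ} (hf : ContDiff ℝ 3 f) (hg : ContDiff ℝ 3 g) (x : ℝ) :
    thirdOrderOp p q r (f - g) x = thirdOrderOp p q r f x - thirdOrderOp p q r g x := by
  have hf₂ : ContDiff ℝ 2 f := hf.of_le (by norm_num)
  have hg₂ : ContDiff ℝ 2 g := hg.of_le (by norm_num)
  simp only [thirdOrderOp, iteratedDeriv_sub hf.contDiffAt hg.contDiffAt,
    iteratedDeriv_sub hf₂.contDiffAt hg₂.contDiffAt,
    deriv_sub (hf.differentiable (by norm_num) x) (hg.differentiable (by norm_num) x), Pi.sub_apply]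
  ring

theorem thirdOrderOp_expSum {ι : Type*} [Fintype ι] (c μ : ι → ℂ)
    (hμ : ∀ i, μ i ^ 3 + p * μ i ^ 2 + q * μ i + r = 0) (x : ℝ) :
    thirdOrderOp p q r (expSum c μ) x = 0 := by
  simp only [thirdOrderOp, iteratedDeriv_expSum, deriv_expSum, expSum, Finset.mul_sum,
    ← Finset.sum_add_distrib]
  exact Finset.sum_eq_zero fun i _ => by
    simp only [Pi.mul_apply, Pi.pow_apply]
    linear_combination c i * cexp (μ i * x) * hμ i

theorem eqOn_zero_of_thirdOrderOp {g : ℝ → ℂ} {a b : ℝ} (hg : ContDiff ℝ 3 g)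
    (hode : ∀ x ∈ Icc a b, thirdOrderOp p q r g x = 0)
    (h₀ : g a = 0) (h₁ : deriv g a = 0) (h₂ : iteratedDeriv 2 g a = 0) :
    EqOn g 0 (Icc a b) := by
  -- companion matrix of the equation: `Y = (g, g', g'')` solves `Y' = A Y` on `[a, b]`
  let A : ℂ × ℂ × ℂ →L[ℂ] ℂ × ℂ × ℂ :=
    (.fst ℂ ℂ ℂ ∘L .snd ℂ ℂ _).prod ((.snd ℂ ℂ ℂ ∘L .snd ℂ ℂ _).prod
      (-r • .fst ℂ ℂ _ - q • (.fst ℂ ℂ ℂ ∘L .snd ℂ ℂ _) - p • (.snd ℂ ℂ ℂ ∘L .snd ℂ ℂ _)))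
  let Y : ℝ → ℂ × ℂ × ℂ := fun x => (g x, deriv g x, iteratedDeriv 2 g x)
  have hY (x : ℝ) (hx : x ∈ Icc a b) : HasDerivAt Y (A (Y x)) x := by
    have hA : A (Y x) = (deriv g x, iteratedDeriv 2 g x, iteratedDeriv 3 g x) := by
      have hx' := hode x hx
      unfold thirdOrderOp at hx'
      simp only [A, Y, ContinuousLinearMap.prod_apply, ContinuousLinearMap.comp_apply,
        ContinuousLinearMap.coe_snd', ContinuousLinearMap.coe_fst', sub_apply, smul_apply,
        smul_eq_mul, Prod.mk.injEq, true_and]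
      linear_combination -hx'
    rw [hA]
    simpa only [Y, iteratedDeriv_zero, iteratedDeriv_one, Nat.reduceAdd] using
      (hasDerivAt_iteratedDeriv (m := 0) hg (by norm_num) x).prodMk
        ((hasDerivAt_iteratedDeriv (m := 1) hg (by norm_num) x).prodMk
          (hasDerivAt_iteratedDeriv (m := 2) hg (by norm_num) x))
  have hY0 : EqOn Y 0 (Icc a b) :=
    ODE_solution_unique_of_mem_Icc_right (v := fun _ => A) (s := fun _ => univ)
      (fun _ _ => A.lipschitz.lipschitzOnWith)
      (fun x hx => (hY x hx).continuousAt.continuousWithinAt)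
      (fun x hx => (hY x (Ico_subset_Icc_self hx)).hasDerivWithinAt) (fun _ _ => trivial)
      continuousOn_const (fun _ _ => by simpa using hasDerivWithinAt_zero _ _)
      (fun _ _ => trivial) (by simp [Y, h₀, h₁, h₂])
  exact fun x hx => congrArg Prod.fst (hY0 hx)

end ThirdOrderODE

section Roots

variable (k l : ℕ)

noncomputable def scale : ℝ := √3 / (3 * √(nR k l))

/-- `roots k l j * x` are the exponents occurring in `phi` and `phiT`. -/
noncomputable def roots : Fin 3 → ℂ :=
  ![I * scale k l * (2 * k + l), -(I * scale k l * (k + 2 * l)), I * scale k l * (l - k)]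

variable {k l}

theorem nR_pos (hl : 0 < l) : 0 < nR k l := by unfold nR; positivity

theorem LL_pos (hl : 0 < l) : 0 < LL k l := by
  have := nR_pos (k := k) hl
  unfold LL; positivity

theorem scale_pos (hl : 0 < l) : 0 < scale k l := by
  have := nR_pos (k := k) hl
  unfold scale; positivity

theorem scale_sq_mul_nR (hl : 0 < l) : scale k l ^ 2 * (3 * nR k l) = 1 := by
  have := nR_pos (k := k) hl
  unfold scale
  rw [div_pow, mul_pow, Real.sq_sqrt (by norm_num), Real.sq_sqrt this.le]
  field_simp

theorem lam_eq : lam k l = (2 * k + l) * (k - l) * (2 * l + k) * scale k l ^ 3 := by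
  have h3 : nR k l ^ ((3 : ℝ) / 2) = √(nR k l) ^ 3 := by
    rw [Real.sqrt_eq_rpow, ← Real.rpow_natCast, ← Real.rpow_mul (by unfold nR; positivity)]
    norm_num
  have hs : √3 ^ 2 = 3 := Real.sq_sqrt (by norm_num)
  rw [lam, scale, h3]
  push_cast
  rcases eq_or_ne (√(nR k l)) 0 with h | h
  · simp [h]
  · field_simp
    linear_combination (-(2 * k + l) * (k - l) * (2 * l + k) * (√3 ^ 2 + 3) : ℝ) * hs

theorem roots_cubic (hl : 0 < l) (j : Fin 3) :
    roots k l j ^ 3 + roots k l j + I * lam k l = 0 := by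
  have hs : ((scale k l : ℝ) : ℂ) ^ 2 * (3 * (k ^ 2 + k * l + l ^ 2)) = 1 := by
    have := scale_sq_mul_nR (k := k) hl
    unfold nR at this
    exact_mod_cast this
  rw [lam_eq]
  push_cast
  set s : ℂ := (scale k l : ℂ)
  fin_cases j <;> simp only [roots, Fin.zero_eta, Fin.mk_one, Fin.reduceFinMk, Fin.isValue,
    Matrix.cons_val_zero, Matrix.cons_val_one, Matrix.cons_val]
  · linear_combination (I * s ^ 3 * (2 * k + l) ^ 3) * I_sq - (I * s * (2 * k + l)) * hs
  · linear_combination (-I * s ^ 3 * (k + 2 * l) ^ 3) * I_sq + (I * s * (k + 2 * l)) * hs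
  · linear_combination (I * s ^ 3 * (l - k) ^ 3) * I_sq - (I * s * (l - k)) * hs

end Roots

section PhiCombo

variable (k l : ℕ)

noncomputable def phiCombo (c₁ c₂ : ℂ) : ℝ → ℂ :=
  expSum ![-c₁ + c₂, -(c₁ * k / l) - c₂, c₁ * (k + l) / l] (roots k l)

variable {k l} (c₁ c₂ : ℂ)

theorem phiCombo_apply (x : ℝ) :
    phiCombo k l c₁ c₂ x = c₁ * phi k l x + c₂ * phiT k l x := by
  simp only [phiCombo, expSum, phi, phiT, roots, scale, Fin.sum_univ_three, Matrix.cons_val_zero,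
    Matrix.cons_val_one, Matrix.cons_val, Nat.cast_add, Nat.cast_mul, Nat.cast_ofNat, ofReal_div,
    ofReal_mul, ofReal_ofNat, ofReal_add, ofReal_sub, ofReal_natCast]
  ring_nf

theorem contDiff_phiCombo {n : WithTop ℕ∞} : ContDiff ℝ n (phiCombo k l c₁ c₂) :=
  contDiff_expSum _ _

theorem thirdOrderOp_phiCombo (hl : 0 < l) (x : ℝ) :
    thirdOrderOp 0 1 (I * lam k l) (phiCombo k l c₁ c₂) x = 0 :=
  thirdOrderOp_expSum _ _ (fun j => by simpa using roots_cubic hl j) x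

theorem phiCombo_zero (hl : 0 < l) : phiCombo k l c₁ c₂ 0 = 0 := by
  have : (l : ℂ) ≠ 0 := by exact_mod_cast hl.ne'
  simp only [phiCombo, expSum_zero, Fin.sum_univ_three, Fin.isValue, Matrix.cons_val_zero,
    Matrix.cons_val_one, Matrix.cons_val]
  field_simp
  ring

theorem deriv_phiCombo_zero (hl : 0 < l) :
    deriv (phiCombo k l c₁ c₂) 0 = 3 * I * scale k l * (k + l) * c₂ := by
  have : (l : ℂ) ≠ 0 := by exact_mod_cast hl.ne'
  simp only [phiCombo, roots, deriv_expSum, expSum_zero, Pi.mul_apply, Fin.sum_univ_three,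
    Fin.isValue, Matrix.cons_val_zero, Matrix.cons_val_one, Matrix.cons_val]
  field_simp
  ring

theorem iteratedDeriv_two_phiCombo_zero (hl : 0 < l) :
    iteratedDeriv 2 (phiCombo k l c₁ c₂) 0 =
      3 * scale k l ^ 2 * (k + l) * (3 * k * c₁ + (l - k) * c₂) := by
  have : (l : ℂ) ≠ 0 := by exact_mod_cast hl.ne'
  simp only [phiCombo, roots, iteratedDeriv_expSum, expSum_zero, Pi.mul_apply, Pi.pow_apply,
    Fin.sum_univ_three, Fin.isValue, Matrix.cons_val_zero, Matrix.cons_val_one, Matrix.cons_val,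
    mul_pow, neg_sq, I_sq]
  field_simp
  ring

variable {c₁ c₂}

theorem eq_zero_of_derivs_phiCombo (hk : 0 < k) (hl : 0 < l)
    (h₁ : deriv (phiCombo k l c₁ c₂) 0 = 0) (h₂ : iteratedDeriv 2 (phiCombo k l c₁ c₂) 0 = 0) :
    c₁ = 0 ∧ c₂ = 0 := by
  have hs : (scale k l : ℂ) ≠ 0 := by exact_mod_cast (scale_pos hl).ne'
  have hkl : (k + l : ℂ) ≠ 0 := by exact_mod_cast (by omega : k + l ≠ 0)
  have hk' : (k : ℂ) ≠ 0 := by exact_mod_cast hk.ne'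
  rw [deriv_phiCombo_zero _ _ hl] at h₁
  rw [iteratedDeriv_two_phiCombo_zero _ _ hl] at h₂
  have hc₂ : c₂ = 0 := by simpa [hs, hkl, I_ne_zero] using h₁
  subst hc₂
  simpa [hs, hkl, hk'] using h₂

theorem exists_phiCombo_derivs (hk : 0 < k) (hl : 0 < l) (d₁ d₂ : ℂ) :
    ∃ c₁ c₂, deriv (phiCombo k l c₁ c₂) 0 = d₁ ∧ iteratedDeriv 2 (phiCombo k l c₁ c₂) 0 = d₂ := by
  have hs : (scale k l : ℂ) ≠ 0 := by exact_mod_cast (scale_pos hl).ne'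
  have hkl : (k + l : ℂ) ≠ 0 := by exact_mod_cast (by omega : k + l ≠ 0)
  have hk' : (k : ℂ) ≠ 0 := by exact_mod_cast hk.ne'
  obtain ⟨c₂, hc₂⟩ : ∃ c₂, 3 * I * scale k l * (k + l) * c₂ = d₁ :=
    ⟨d₁ / (3 * I * scale k l * (k + l)), by field_simp⟩
  obtain ⟨c₁, hc₁⟩ : ∃ c₁, 3 * scale k l ^ 2 * (k + l) * (3 * k * c₁ + (l - k) * c₂) = d₂ :=
    ⟨(d₂ / (3 * scale k l ^ 2 * (k + l)) - (l - k) * c₂) / (3 * k), by field_simp; ring⟩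
  exact ⟨c₁, c₂, by rw [deriv_phiCombo_zero _ _ hl, hc₂],
    by rw [iteratedDeriv_two_phiCombo_zero _ _ hl, hc₁]⟩

end PhiCombo
theorem stmt_7_general (k l : ℕ) (hk : 0 < k) (hl : 0 < l) :
    (∀ c₁ c₂ : ℂ,
      (∀ x ∈ Set.Icc (0 : ℝ) (LL k l), c₁ * phi k l x + c₂ * phiT k l x = 0) →
      c₁ = 0 ∧ c₂ = 0) ∧
    (∀ ψ : ℝ → ℂ, ContDiff ℝ 3 ψ →
      (∀ x ∈ Set.Icc (0 : ℝ) (LL k l),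
        deriv (deriv (deriv ψ)) x + deriv ψ x + Complex.I * ((lam k l : ℝ) : ℂ) * ψ x = 0) →
      ψ 0 = 0 → ψ (LL k l) = 0 → deriv ψ 0 = deriv ψ (LL k l) →
      ∃ c₁ c₂ : ℂ, ∀ x ∈ Set.Icc (0 : ℝ) (LL k l),
        ψ x = c₁ * phi k l x + c₂ * phiT k l x) := by
  refine ⟨fun c₁ c₂ hzero => ?_, fun ψ hψ hode hψ0 _ _ => ?_⟩
  · have hL := LL_pos (k := k) hl
    have hvanish : EqOn (phiCombo k l c₁ c₂) 0 (Icc 0 (LL k l)) := fun x hx => by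
      simpa [phiCombo_apply] using hzero x hx
    have hderiv (m : ℕ) (hm : m ≤ 2) : iteratedDeriv m (phiCombo k l c₁ c₂) 0 = 0 :=
      iteratedDeriv_eqOn_zero hL (contDiff_phiCombo c₁ c₂) hvanish hm (left_mem_Icc.2 hL.le)
    exact eq_zero_of_derivs_phiCombo hk hl (by simpa using hderiv 1 (by norm_num))
      (hderiv 2 le_rfl)
  · obtain ⟨c₁, c₂, h₁, h₂⟩ := exists_phiCombo_derivs hk hl (deriv ψ 0) (iteratedDeriv 2 ψ 0)
    have hcombo : ContDiff ℝ 3 (phiCombo k l c₁ c₂) := contDiff_phiCombo c₁ c₂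
    have hdiff : EqOn (ψ - phiCombo k l c₁ c₂) 0 (Icc 0 (LL k l)) := by
      refine eqOn_zero_of_thirdOrderOp (p := 0) (q := 1) (r := I * lam k l) (hψ.sub hcombo)
        (fun y hy => ?_) ?_ ?_ ?_
      · rw [thirdOrderOp_sub hψ hcombo, thirdOrderOp_phiCombo _ _ hl, sub_zero]
        simpa [thirdOrderOp, iteratedDeriv_eq_iterate] using hode y hy
      · simp [hψ0, phiCombo_zero _ _ hl]
      · rw [deriv_sub (hψ.differentiable (by norm_num) 0) (hcombo.differentiable (by norm_num) 0),
          h₁, sub_self]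
      · rw [iteratedDeriv_sub (hψ.of_le (by norm_num)).contDiffAt
          (hcombo.of_le (by norm_num)).contDiffAt, h₂, sub_self]
    exact ⟨c₁, c₂, fun x hx => by rw [← phiCombo_apply]; exact sub_eq_zero.1 (hdiff hx)⟩

theorem stmt_7 (k l : ℕ) (hk : 0 < k) (hl : 0 < l) (hmod : k ≡ l [MOD 3]) :
    (∀ c₁ c₂ : ℂ,
      (∀ x ∈ Set.Icc (0 : ℝ) (LL k l), c₁ * phi k l x + c₂ * phiT k l x = 0) →
      c₁ = 0 ∧ c₂ = 0) ∧
    (∀ ψ : ℝ → ℂ, ContDiff ℝ 3 ψ →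
      (∀ x ∈ Set.Icc (0 : ℝ) (LL k l),
        deriv (deriv (deriv ψ)) x + deriv ψ x + Complex.I * ((lam k l : ℝ) : ℂ) * ψ x = 0) →
      ψ 0 = 0 → ψ (LL k l) = 0 → deriv ψ 0 = deriv ψ (LL k l) →
      ∃ c₁ c₂ : ℂ, ∀ x ∈ Set.Icc (0 : ℝ) (LL k l),
        ψ x = c₁ * phi k l x + c₂ * phiT k l x) :=
  stmt_7_general k l hk hl
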